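/- There exist a complete lattice L and two DISTINCT maps h ≠ h' : DI(L) → DI(L), each preserving arbitrary suprema of distributive ideals and each satisfying the compatibility condition (sSup A = sSup B ⟹ sSup of the image ideals are equal), such that sSup (h(A)) = sSup (h'(A)) for every A ∈ DI(L). (Hence the functor G, which sends such a map h to the induced suprema-preserving map on L, is not faithful.) -/

import Mathlib

/-- A subset `S` of a complete lattice is *distributive* if
`a ⊓ sSup S = ⨆ s ∈ S, a ⊓ s` for every `a`. -/
def IsDistrib {L : Type*} [CompleteLattice L] (S : Set L) : Prop :=
  ∀ a : L, a ⊓ sSup S = ⨆ s ∈ S, a ⊓ s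

/-- A *distributive ideal* is a lower set closed under suprema of its
distributive subsets. -/
def IsDistribIdeal {L : Type*} [CompleteLattice L] (I : Set L) : Prop :=
  IsLowerSet I ∧ ∀ S : Set L, S ⊆ I → IsDistrib S → sSup S ∈ I

/-- The lower set `↓A` generated by `A`. -/
def downSet {L : Type*} [CompleteLattice L] (A : Set L) : Set L :=
  {x | ∃ a ∈ A, x ≤ a}

/-- The closure `𝒞(A) = { sSup B | B ⊆ ↓A, B distributive }`. -/
def distClosure {L : Type*} [CompleteLattice L] (A : Set L) : Set L :=
  {x | ∃ B : Set L, B ⊆ downSet A ∧ IsDistrib B ∧ x = sSup B}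

/-- The properties required of each of the two maps in Statement 18: `h` sends
distributive ideals to distributive ideals, preserves arbitrary suprema of
distributive ideals, and is compatible with `sSup`. -/
def IsDIMorphism (L : Type) [CompleteLattice L] (h : Set L → Set L) : Prop :=
  (∀ A : Set L, IsDistribIdeal A → IsDistribIdeal (h A)) ∧
  (∀ 𝒜 : Set (Set L), (∀ A ∈ 𝒜, IsDistribIdeal A) →
    h (distClosure (⋃₀ 𝒜)) = distClosure (⋃ A ∈ 𝒜, h A)) ∧
  (∀ A B : Set L, IsDistribIdeal A → IsDistribIdeal B → sSup A = sSup B →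
    sSup (h A) = sSup (h B))

/-- The full existential content of Statement 18: two maps on `DI(L)`, each a
morphism as above, which agree after applying `sSup` everywhere but differ on
some distributive ideal. Hence the functor `G` is not faithful. -/
def NotFaithfulWitness (L : Type) [CompleteLattice L]
    (h h' : Set L → Set L) : Prop :=
  IsDIMorphism L h ∧ IsDIMorphism L h' ∧
  (∀ A : Set L, IsDistribIdeal A → sSup (h A) = sSup (h' A)) ∧
  (∃ A : Set L, IsDistribIdeal A ∧ h A ≠ h' A)

/-!
A map on distributive ideals that sends `{⊥}` to itself and every other ideal to one fixed
distributive ideal `J` preserves the suprema `𝒞(⋃ Aᵢ)`, because `𝒞` neither changes `sSup` nor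
enlarges a distributive ideal. Two such maps, for distinct ideals `J ≠ J'` with the same supremum,
are distinct morphisms inducing the same map on `L`. Such ideals exist as soon as some `x ≠ ⊥`
is disjoint from two elements `y`, `z` with `y ⊔ z = ⊤`: the elements disjoint from `x` form a
distributive ideal with supremum `⊤` that misses `x`. In the lattice of submodules of `R × R`
the diagonal and the two axes are such elements.
-/

open Set

section CompleteLattice

variable {L : Type*} [CompleteLattice L]

lemma isDistrib_empty : IsDistrib (∅ : Set L) := by
  simp [IsDistrib]

lemma isDistribIdeal_univ : IsDistribIdeal (univ : Set L) :=
  ⟨isLowerSet_univ, fun _ _ _ => trivial⟩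

lemma isDistribIdeal_singleton_bot : IsDistribIdeal ({⊥} : Set L) :=
  ⟨fun _ _ hle h => le_bot_iff.1 (h ▸ hle),
    fun _ hS _ => sSup_eq_bot.2 fun _ hs => hS hs⟩

lemma isDistribIdeal_setOf_disjoint (x : L) : IsDistribIdeal {y | Disjoint x y} := by
  refine ⟨fun _ _ hle h => h.mono_right hle, fun S hS hD => ?_⟩
  rw [mem_ofPred_eq, disjoint_iff, hD x]
  exact iSup₂_eq_bot.2 fun s hs => disjoint_iff.1 (hS hs)

lemma IsDistribIdeal.bot_mem {I : Set L} (hI : IsDistribIdeal I) : ⊥ ∈ I :=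
  sSup_empty (α := L) ▸ hI.2 ∅ (empty_subset I) isDistrib_empty

lemma IsDistribIdeal.eq_singleton_bot_of_sSup_eq_bot {I : Set L} (hI : IsDistribIdeal I)
    (h : sSup I = ⊥) : I = {⊥} :=
  (Nonempty.subset_singleton_iff ⟨⊥, hI.bot_mem⟩).1 fun _ hx => sSup_eq_bot.1 h _ hx

lemma subset_distClosure (S : Set L) : S ⊆ distClosure S := fun s hs =>
  ⟨{s}, singleton_subset_iff.2 ⟨s, hs, le_rfl⟩, by simp [IsDistrib], sSup_singleton.symm⟩

lemma le_sSup_of_mem_distClosure {S : Set L} {x : L} (hx : x ∈ distClosure S) : x ≤ sSup S := by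
  obtain ⟨B, hB, -, rfl⟩ := hx
  refine sSup_le fun b hb => ?_
  obtain ⟨s, hs, hbs⟩ := hB hb
  exact hbs.trans (le_sSup hs)

lemma sSup_distClosure (S : Set L) : sSup (distClosure S) = sSup S :=
  le_antisymm (sSup_le fun _ => le_sSup_of_mem_distClosure) (sSup_le_sSup (subset_distClosure S))

lemma bot_mem_distClosure (S : Set L) : ⊥ ∈ distClosure S :=
  ⟨∅, empty_subset _, isDistrib_empty, sSup_empty.symm⟩

lemma distClosure_eq_singleton_bot {S : Set L} (hS : S ⊆ {⊥}) : distClosure S = {⊥} := by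
  refine (Nonempty.subset_singleton_iff ⟨⊥, bot_mem_distClosure S⟩).1 fun x hx => le_bot_iff.1 ?_
  exact (le_sSup_of_mem_distClosure hx).trans (sSup_le fun s hs => (hS hs).le)

lemma IsDistribIdeal.distClosure_eq {I : Set L} (hI : IsDistribIdeal I) : distClosure I = I := by
  refine Subset.antisymm ?_ (subset_distClosure I)
  rintro _ ⟨B, hB, hD, rfl⟩
  exact hI.2 B (fun b hb => (hB hb).elim fun i ⟨hi, hbi⟩ => hI.1 hbi hi) hD

open Classical in
noncomputable def botOr (J A : Set L) : Set L :=
  if sSup A = ⊥ then {⊥} else J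

lemma botOr_subset {J : Set L} (hJ : IsDistribIdeal J) (A : Set L) : botOr J A ⊆ J := by
  unfold botOr
  split_ifs
  · exact singleton_subset_iff.2 hJ.bot_mem
  · exact Subset.rfl

end CompleteLattice

section

variable {L : Type} [CompleteLattice L]

lemma botOr_distClosure_sUnion {J : Set L} (hJ : IsDistribIdeal J) (𝒜 : Set (Set L)) :
    botOr J (distClosure (⋃₀ 𝒜)) = distClosure (⋃ A ∈ 𝒜, botOr J A) := by
  by_cases h𝒜 : ∀ A ∈ 𝒜, sSup A = ⊥
  · have hU : sSup (distClosure (⋃₀ 𝒜)) = ⊥ := by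
      rw [sSup_distClosure, sSup_sUnion]
      exact iSup₂_eq_bot.2 h𝒜
    have hbot : (⋃ A ∈ 𝒜, botOr J A) ⊆ {⊥} :=
      iUnion₂_subset fun A hA => by rw [botOr, if_pos (h𝒜 A hA)]
    rw [botOr, if_pos hU, distClosure_eq_singleton_bot hbot]
  · push Not at h𝒜
    obtain ⟨A₀, hA₀, hA₀bot⟩ := h𝒜
    have hU : sSup (distClosure (⋃₀ 𝒜)) ≠ ⊥ := by
      rw [sSup_distClosure]
      exact ne_bot_of_le_ne_bot hA₀bot (sSup_le_sSup (subset_sUnion_of_mem hA₀))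
    have hunion : (⋃ A ∈ 𝒜, botOr J A) = J := by
      refine Subset.antisymm (iUnion₂_subset fun A _ => botOr_subset hJ A) ?_
      calc J = botOr J A₀ := by rw [botOr, if_neg hA₀bot]
        _ ⊆ ⋃ A ∈ 𝒜, botOr J A := subset_biUnion_of_mem hA₀
    rw [botOr, if_neg hU, hunion, hJ.distClosure_eq]

lemma isDIMorphism_botOr {J : Set L} (hJ : IsDistribIdeal J) : IsDIMorphism L (botOr J) := by
  refine ⟨fun A _ => ?_, fun 𝒜 _ => botOr_distClosure_sUnion hJ 𝒜,
    fun A B _ _ hAB => by rw [botOr, botOr, hAB]⟩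
  unfold botOr
  split_ifs
  · exact isDistribIdeal_singleton_bot
  · exact hJ

theorem notFaithfulWitness_botOr {J J' : Set L} (hJ : IsDistribIdeal J)
    (hJ' : IsDistribIdeal J') (hsup : sSup J = sSup J') (hne : J ≠ J') :
    NotFaithfulWitness L (botOr J) (botOr J') := by
  refine ⟨isDIMorphism_botOr hJ, isDIMorphism_botOr hJ', fun A _ => ?_, J, hJ, ?_⟩
  · unfold botOr
    split_ifs
    exacts [rfl, hsup]
  · have hJbot : sSup J ≠ ⊥ := fun h => hne <| by
      rw [hJ.eq_singleton_bot_of_sSup_eq_bot h, hJ'.eq_singleton_bot_of_sSup_eq_bot (hsup ▸ h)]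
    rwa [botOr, botOr, if_neg hJbot, if_neg hJbot]

theorem exists_notFaithfulWitness_of_disjoint {x y z : L} (hx : x ≠ ⊥) (hy : Disjoint x y)
    (hz : Disjoint x z) (hyz : y ⊔ z = ⊤) : ∃ h h' : Set L → Set L, NotFaithfulWitness L h h' := by
  have hsup : sSup {w | Disjoint x w} = sSup (univ : Set L) := by
    rw [sSup_univ, eq_top_iff, ← hyz]
    exact sup_le (le_sSup hy) (le_sSup hz)
  have hne : {w | Disjoint x w} ≠ univ := fun h =>
    hx (disjoint_self.1 (eq_univ_iff_forall.1 h x))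
  exact ⟨_, _, notFaithfulWitness_botOr (isDistribIdeal_setOf_disjoint x) isDistribIdeal_univ
    hsup hne⟩

end

section Plane

open LinearMap

variable (R : Type*) [Ring R]

lemma disjoint_ker_fst_sub_snd_ker_snd :
    Disjoint (ker (fst R R R - snd R R R)) (ker (snd R R R)) := by
  refine Submodule.disjoint_def.2 fun v hv hv₂ => ?_
  simp only [mem_ker, LinearMap.sub_apply, fst_apply, snd_apply] at hv hv₂
  exact Prod.ext (by simpa [hv₂] using hv) hv₂

lemma disjoint_ker_fst_sub_snd_ker_fst :
    Disjoint (ker (fst R R R - snd R R R)) (ker (fst R R R)) := by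
  refine Submodule.disjoint_def.2 fun v hv hv₁ => ?_
  simp only [mem_ker, LinearMap.sub_apply, fst_apply, snd_apply] at hv hv₁
  exact Prod.ext hv₁ (by simpa [hv₁] using hv)

lemma ker_fst_sub_snd_ne_bot [Nontrivial R] : ker (fst R R R - snd R R R) ≠ ⊥ :=
  Submodule.ne_bot_iff _ |>.2 ⟨(1, 1), by simp, by simp⟩

lemma ker_snd_sup_ker_fst : ker (snd R R R) ⊔ ker (fst R R R) = ⊤ := by
  rw [ker_snd, ker_fst, sup_range_inl_inr]

end Plane

/-- There exist a complete lattice `L` and two distinct suprema-preserving,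
`sSup`-compatible maps `DI(L) → DI(L)` inducing the same map on `L`:
the functor `G` is not faithful. -/
theorem G_not_faithful :
    ∃ (L : Type) (inst : CompleteLattice L) (h h' : Set L → Set L),
      @NotFaithfulWitness L inst h h' :=
  ⟨Submodule ℚ (ℚ × ℚ), inferInstance,
    exists_notFaithfulWitness_of_disjoint (ker_fst_sub_snd_ne_bot ℚ)
      (disjoint_ker_fst_sub_snd_ker_snd ℚ) (disjoint_ker_fst_sub_snd_ker_fst ℚ)
      (ker_snd_sup_ker_fst ℚ)⟩
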